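/- arXiv:1312.5260 — 6 statements merged into one kernel-verified Lean document; each statement's English description precedes it below -/
import Mathlib

section
/- Let β₁, β₂, β₃ ∈ (0, π/2) satisfy sin²β₁ + sin²β₂ + sin²β₃ = 2 and β₁ ≤ β₂ ≤ β₃. Then β₃ < β₁ + β₂. -/
theorem beta_triangle_ineq (β₁ β₂ β₃ : ℝ)
    (h₁ : β₁ ∈ Set.Ioo 0 (Real.pi / 2)) (h₂ : β₂ ∈ Set.Ioo 0 (Real.pi / 2))
    (h₃ : β₃ ∈ Set.Ioo 0 (Real.pi / 2))
    (hsum : Real.sin β₁ ^ 2 + Real.sin β₂ ^ 2 + Real.sin β₃ ^ 2 = 2)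
    (h12 : β₁ ≤ β₂) (h23 : β₂ ≤ β₃) :
    β₃ < β₁ + β₂ := by
  obtain ⟨hb1, hb1'⟩ := h₁
  obtain ⟨hb2, hb2'⟩ := h₂
  obtain ⟨hb3, hb3'⟩ := h₃
  have hpi := Real.pi_pos
  -- sin β₃ < 1
  have hs3 : Real.sin β₃ < 1 := by
    have := Real.strictMonoOn_sin (a := β₃) (b := Real.pi / 2)
      ⟨by linarith, by linarith⟩
      ⟨by linarith, le_refl _⟩ hb3'
    simpa [Real.sin_pi_div_two] using this
  have hs3sq : Real.sin β₃ ^ 2 < 1 := by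
    have h0 : 0 ≤ Real.sin β₃ := Real.sin_nonneg_of_nonneg_of_le_pi (le_of_lt hb3) (by linarith)
    nlinarith
  -- sin β₂ > cos β₁
  have hc1 : Real.sin β₂ ^ 2 > Real.cos β₁ ^ 2 := by
    have := Real.sin_sq_add_cos_sq β₁
    nlinarith
  have hc1pos : 0 < Real.cos β₁ := Real.cos_pos_of_mem_Ioo ⟨by linarith, hb1'⟩
  have hs2pos : 0 < Real.sin β₂ := Real.sin_pos_of_pos_of_lt_pi hb2 (by linarith)
  have hgt : Real.cos β₁ < Real.sin β₂ := by nlinarith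
  -- hence β₂ > π/2 - β₁
  have hkey : Real.pi / 2 - β₁ < β₂ := by
    by_contra hle
    push_neg at hle
    have := Real.strictMonoOn_sin.le_iff_le (a := β₂) (b := Real.pi / 2 - β₁)
      ⟨by linarith, by linarith⟩
      ⟨by linarith, by linarith⟩
    rw [Real.sin_pi_div_two_sub] at this
    have : Real.sin β₂ ≤ Real.cos β₁ := this.mpr hle
    linarith
  linarith
end

section
/- Let a, b, c be the sides of a triangle with semiperimeter p, and set βᵢ = arcsin(√(sᵢ/p)) for sᵢ ∈ {a, b, c}. Then the largest of β₁, β₂, β₃ is strictly less than the sum of the other two. -/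
open Real

lemma beta_aux (a b c : ℝ)
    (ha : 0 < a) (hb : 0 < b) (hc : 0 < c)
    (hbc : a < b + c) (hca : b < a + c) (hab : c < a + b) :
    Real.arcsin (Real.sqrt (a / ((a + b + c) / 2))) <
      Real.arcsin (Real.sqrt (b / ((a + b + c) / 2))) +
      Real.arcsin (Real.sqrt (c / ((a + b + c) / 2))) := by
  set p : ℝ := (a + b + c) / 2 with hp
  clear_value p
  have hp0 : 0 < p := by rw [hp]; linarith
  have hap : a < p := by rw [hp]; linarith
  have hbp : b < p := by rw [hp]; linarith
  have hcp : c < p := by rw [hp]; linarith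
  have hm1 : ∀ x : ℝ, (-1:ℝ) ≤ Real.sqrt x := fun x =>
    le_trans (by norm_num) (Real.sqrt_nonneg x)
  have ha1 : a / p < 1 := (div_lt_one hp0).2 hap
  have hb1 : b / p < 1 := (div_lt_one hp0).2 hbp
  have hc1 : c / p < 1 := (div_lt_one hp0).2 hcp
  have hsa : Real.sqrt (a / p) < 1 := by
    rw [show (1:ℝ) = Real.sqrt 1 by simp]
    exact Real.sqrt_lt_sqrt (by positivity) ha1
  have hβ1 : Real.arcsin (Real.sqrt (a / p)) < π / 2 :=
    Real.arcsin_lt_pi_div_two.2 hsa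
  have hβ2pos : 0 < Real.arcsin (Real.sqrt (b / p)) :=
    Real.arcsin_pos.2 (Real.sqrt_pos.2 (by positivity))
  have hβ3pos : 0 < Real.arcsin (Real.sqrt (c / p)) :=
    Real.arcsin_pos.2 (Real.sqrt_pos.2 (by positivity))
  set β₂ := Real.arcsin (Real.sqrt (b / p))
  set β₃ := Real.arcsin (Real.sqrt (c / p))
  by_cases hS : π / 2 ≤ β₂ + β₃
  · linarith
  push_neg at hS
  rw [Real.arcsin_lt_iff_lt_sin ⟨hm1 _, hsa.le⟩ ⟨by linarith, hS.le⟩]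
  have hb01 : Real.sqrt (b / p) ∈ Set.Icc (-1:ℝ) 1 :=
    ⟨hm1 _, by
      rw [show (1:ℝ) = Real.sqrt 1 by simp]
      exact Real.sqrt_le_sqrt hb1.le⟩
  have hc01 : Real.sqrt (c / p) ∈ Set.Icc (-1:ℝ) 1 :=
    ⟨hm1 _, by
      rw [show (1:ℝ) = Real.sqrt 1 by simp]
      exact Real.sqrt_le_sqrt hc1.le⟩
  have hmb : 0 < 1 - b / p := by linarith
  have hmc : 0 < 1 - c / p := by linarith
  have hsinS : Real.sin (β₂ + β₃)
      = Real.sqrt (b / p) * Real.sqrt (1 - c / p)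
        + Real.sqrt (1 - b / p) * Real.sqrt (c / p) := by
    rw [Real.sin_add, Real.sin_arcsin hb01.1 hb01.2, Real.sin_arcsin hc01.1 hc01.2,
        Real.cos_arcsin, Real.cos_arcsin,
        Real.sq_sqrt (by positivity : (0:ℝ) ≤ b / p),
        Real.sq_sqrt (by positivity : (0:ℝ) ≤ c / p)]
  rw [hsinS, ← Real.sqrt_mul (by positivity), ← Real.sqrt_mul hmb.le]
  set X := b / p * (1 - c / p) with hX
  set Y := (1 - b / p) * (c / p) with hY
  have hX0 : 0 < X := by positivity
  have hY0 : 0 < Y := by positivity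
  have hsq : a / p < (Real.sqrt X + Real.sqrt Y) ^ 2 := by
    have hXY : Real.sqrt X * Real.sqrt Y = Real.sqrt (X * Y) :=
      (Real.sqrt_mul hX0.le _).symm
    have hexp : (Real.sqrt X + Real.sqrt Y) ^ 2 = X + Y + 2 * Real.sqrt (X * Y) := by
      rw [add_sq, Real.sq_sqrt hX0.le, Real.sq_sqrt hY0.le, mul_assoc, hXY]
      ring
    rw [hexp]
    set s := Real.sqrt ((1 - b/p) * (1 - c/p)) with hs
    set t := Real.sqrt ((b/p) * (c/p)) with ht
    have hs2 : s ^ 2 = (1 - b/p) * (1 - c/p) := Real.sq_sqrt (by positivity)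
    have ht2 : t ^ 2 = (b/p) * (c/p) := Real.sq_sqrt (by positivity)
    have hs0 : 0 < s := Real.sqrt_pos.2 (by positivity)
    have hXYst : Real.sqrt (X * Y) = s * t := by
      rw [hs, ht, ← Real.sqrt_mul (by positivity)]
      congr 1
      rw [hX, hY]; ring
    rw [hXYst]
    have hsum1 : 1 < b / p + c / p := by
      have hbc' : p < b + c := by rw [hp]; linarith
      have h3 : 1 < (b + c) / p := (one_lt_div hp0).2 hbc'
      have h4 : (b + c) / p = b / p + c / p := add_div b c p
      linarith
    have hst : s < t := by
      rw [hs, ht]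
      exact Real.sqrt_lt_sqrt (by positivity) (by nlinarith)
    have hkey : a / p = X + Y + 2 * s ^ 2 := by
      rw [hX, hY, hs2]
      have habc : a = 2 * p - b - c := by rw [hp]; ring
      rw [habc]
      field_simp
      ring
    have h5 : s * s < s * t := mul_lt_mul_of_pos_left hst hs0
    have h6 : a / p = X + Y + 2 * (s * s) := by rw [hkey]; ring
    linarith
  calc Real.sqrt (a / p) < Real.sqrt ((Real.sqrt X + Real.sqrt Y) ^ 2) :=
        Real.sqrt_lt_sqrt (by positivity) hsq
    _ = Real.sqrt X + Real.sqrt Y := Real.sqrt_sq (by positivity)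

theorem beta_of_sides_triangle_ineq (a b c : ℝ)
    (ha : 0 < a) (hb : 0 < b) (hc : 0 < c)
    (hab : c < a + b) (hbc : a < b + c) (hca : b < a + c) :
    let p := (a + b + c) / 2
    let β₁ := Real.arcsin (Real.sqrt (a / p))
    let β₂ := Real.arcsin (Real.sqrt (b / p))
    let β₃ := Real.arcsin (Real.sqrt (c / p))
    max β₁ (max β₂ β₃) < β₁ + β₂ + β₃ - max β₁ (max β₂ β₃) := by
  intro p β₁ β₂ β₃
  have h1 : β₁ < β₂ + β₃ := beta_aux a b c ha hb hc hbc hca hab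
  have e2 : (b + a + c) / 2 = p := by show _ = (a+b+c)/2; ring
  have e3 : (c + a + b) / 2 = p := by show _ = (a+b+c)/2; ring
  have h2 : β₂ < β₁ + β₃ := by
    have := beta_aux b a c hb ha hc hca hbc (by linarith)
    rw [e2] at this; exact this
  have h3 : β₃ < β₁ + β₂ := by
    have := beta_aux c a b hc ha hb (by linarith) (by linarith) (by linarith)
    rw [e3] at this; linarith
  rcases max_cases β₁ (max β₂ β₃) with ⟨h, _⟩ | ⟨h, _⟩ <;> rw [h]
  · linarith
  · rcases max_cases β₂ β₃ with ⟨h', _⟩ | ⟨h', _⟩ <;> rw [h'] at * <;> linarith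
end

section
/- Let a, b be reals with 1 ≤ a ≤ b < a + 1, and define f : ℝ → ℝ by f(x) = |||x − 1| − a| − b|. Then every point of the interval [b − a, 1] is 2-periodic under f, i.e. f(f(x)) = x for all x ∈ [b − a, 1]. -/
theorem two_periodic_interval (a b : ℝ) (h1a : 1 ≤ a) (hab : a ≤ b) (hba : b < a + 1)
    (f : ℝ → ℝ) (hf : ∀ x, f x = |(|(|x - 1|) - a|) - b|) :
    ∀ x ∈ Set.Icc (b - a) 1, f (f x) = x := by
  have key : ∀ x, b - a ≤ x → x ≤ 1 → f x = b - a + 1 - x := by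
    intro x hx1 hx2
    rw [hf, abs_of_nonpos (by linarith : x - 1 ≤ 0),
      abs_of_nonpos (by linarith : -(x - 1) - a ≤ 0),
      abs_of_nonpos (by linarith : -(-(x - 1) - a) - b ≤ 0)]
    ring
  intro x hx
  rw [key x hx.1 hx.2, key _ (by linarith [hx.2]) (by linarith [hx.1])]
  ring
end

section
/- Let a, b be reals with 1 ≤ a ≤ b < a + 1 and f(x) = |||x − 1| − a| − b|. Then every orbit starting in [0, b] eventually lands in [b − a, 1]: for each x ∈ [0, b] there exists n with fⁿ(x) ∈ [b − a, 1]. -/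
theorem orbit_reaches_core (a b : ℝ) (h1a : 1 ≤ a) (hab : a ≤ b) (hba : b < a + 1)
    (f : ℝ → ℝ) (hf : ∀ x, f x = |(|(|x - 1|) - a|) - b|) :
    ∀ x ∈ Set.Icc 0 b, ∃ n : ℕ, f^[n] x ∈ Set.Icc (b - a) 1 := by
  have hfhigh : ∀ x, 1 < x → x ≤ b → f x = x + (b - a) - 1 := by
    intro x hx1 hxb
    rw [hf, abs_of_nonneg (by linarith : (0:ℝ) ≤ x - 1),
      abs_of_nonpos (by linarith : x - 1 - a ≤ 0),
      abs_of_nonpos (by linarith : -(x - 1 - a) - b ≤ 0)]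
    ring
  have hflow : ∀ x, 0 ≤ x → x ≤ 1 → f x = (b - a) + 1 - x := by
    intro x hx0 hx1
    rw [hf, abs_of_nonpos (by linarith : x - 1 ≤ 0),
      abs_of_nonpos (by linarith : -(x - 1) - a ≤ 0),
      abs_of_nonpos (by linarith : -(-(x - 1) - a) - b ≤ 0)]
    ring
  have key : ∀ N : ℕ, ∀ x, 1 < x → x ≤ b → x ≤ 1 + N * (1 - (b - a)) →
      ∃ n : ℕ, f^[n] x ∈ Set.Icc (b - a) 1 := by
    intro N
    induction N with
    | zero => intro x hx1 _ hN; norm_num at hN; linarith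
    | succ N ih =>
      intro x hx1 hxb hN
      have hfx : f x = x + (b - a) - 1 := hfhigh x hx1 hxb
      by_cases h : f x ≤ 1
      · refine ⟨1, ?_⟩
        simp only [Function.iterate_one, Set.mem_Icc]
        constructor <;> [rw [hfx]; skip] <;> linarith
      · push_neg at h
        push_cast at hN
        obtain ⟨n, hn⟩ := ih (f x) h (by rw [hfx]; linarith) (by rw [hfx]; linarith)
        exact ⟨n + 1, by rwa [Function.iterate_succ_apply]⟩
  have main : ∀ x, 1 < x → x ≤ b → ∃ n : ℕ, f^[n] x ∈ Set.Icc (b - a) 1 := by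
    intro x hx1 hxb
    obtain ⟨N, hNN⟩ := exists_nat_ge ((b - 1) / (1 - (b - a)))
    have hc : (0:ℝ) < 1 - (b - a) := by linarith
    have : b - 1 ≤ N * (1 - (b - a)) := by
      rw [div_le_iff₀ hc] at hNN; linarith
    exact key N x hx1 hxb (by linarith)
  intro x hx
  obtain ⟨hx0, hxb⟩ := hx
  by_cases h1 : 1 < x
  · exact main x h1 hxb
  · push_neg at h1
    by_cases hc : b - a ≤ x
    · exact ⟨0, Set.mem_Icc.mpr ⟨hc, h1⟩⟩
    · push_neg at hc
      have hfx : f x = (b - a) + 1 - x := hflow x hx0 h1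
      obtain ⟨n, hn⟩ := main (f x) (by rw [hfx]; linarith) (by rw [hfx]; linarith)
      exact ⟨n + 1, by rwa [Function.iterate_succ_apply]⟩
end

section
/- Let a, b be reals with 1 ≤ a ≤ b < a + 1 and f(x) = |||x − 1| − a| − b|. Then every nonnegative orbit is eventually 2-periodic: for each x ≥ 0 there exists n such that f^(n+2)(x) = fⁿ(x). -/
theorem eventually_two_periodic (a b : ℝ) (h1a : 1 ≤ a) (hab : a ≤ b) (hba : b < a + 1)
    (f : ℝ → ℝ) (hf : ∀ x, f x = |(|(|x - 1|) - a|) - b|) :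
    ∀ x : ℝ, 0 ≤ x → ∃ n : ℕ, f^[n + 2] x = f^[n] x := by
  -- piecewise formulas
  have P1 : ∀ y : ℝ, 0 ≤ y → y ≤ 1 → f y = b - a + 1 - y := by
    intro y h0 h1
    rw [hf, abs_of_nonpos (show y - 1 ≤ 0 by linarith),
      abs_of_nonpos (show -(y - 1) - a ≤ 0 by linarith),
      abs_of_nonpos (show -(-(y - 1) - a) - b ≤ 0 by linarith)]
    ring
  have P2 : ∀ y : ℝ, 1 ≤ y → y ≤ 1 + a → f y = y - (1 + a - b) := by
    intro y h0 h1
    rw [hf, abs_of_nonneg (show (0:ℝ) ≤ y - 1 by linarith),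
      abs_of_nonpos (show y - 1 - a ≤ 0 by linarith),
      abs_of_nonpos (show -(y - 1 - a) - b ≤ 0 by linarith)]
    ring
  have P3 : ∀ y : ℝ, 1 + a ≤ y → y ≤ 1 + a + b → f y = 1 + a + b - y := by
    intro y h0 h1
    rw [hf, abs_of_nonneg (show (0:ℝ) ≤ y - 1 by linarith),
      abs_of_nonneg (show (0:ℝ) ≤ y - 1 - a by linarith),
      abs_of_nonpos (show y - 1 - a - b ≤ 0 by linarith)]
    ring
  have P4 : ∀ y : ℝ, 1 + a + b ≤ y → f y = y - (1 + a + b) := by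
    intro y h0
    rw [hf, abs_of_nonneg (show (0:ℝ) ≤ y - 1 by linarith),
      abs_of_nonneg (show (0:ℝ) ≤ y - 1 - a by linarith),
      abs_of_nonneg (show (0:ℝ) ≤ y - 1 - a - b by linarith)]
    ring
  have hd : (0:ℝ) < 1 + a - b := by linarith
  -- on S = [b-a, 1], f ∘ f = id
  have hS : ∀ y : ℝ, b - a ≤ y → y ≤ 1 → f (f y) = y := by
    intro y h0 h1
    rw [P1 y (by linarith) h1, P1 _ (by linarith) (by linarith)]
    ring
  -- from (1, 1+a] we descend by 1+a-b into S
  have Q : ∀ k : ℕ, ∀ y : ℝ, b - a ≤ y → y ≤ 1 + a → y ≤ 1 + k * (1 + a - b) →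
      ∃ n, b - a ≤ f^[n] y ∧ f^[n] y ≤ 1 := by
    intro k
    induction k with
    | zero =>
      intro y h1 h2 h3
      refine ⟨0, by simpa using h1, by simpa using h3.trans (by norm_num)⟩
    | succ k ih =>
      intro y h1 h2 h3
      by_cases hy : y ≤ 1
      · exact ⟨0, by simpa using h1, by simpa using hy⟩
      · push_neg at hy
        have hfy : f y = y - (1 + a - b) := P2 y hy.le h2
        obtain ⟨n, hn1, hn2⟩ := ih (f y) (by rw [hfy]; linarith) (by rw [hfy]; linarith)
          (by rw [hfy]; push_cast at h3 ⊢; linarith)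
        exact ⟨n + 1, by rwa [Function.iterate_succ_apply],
          by rwa [Function.iterate_succ_apply]⟩
  -- from [0, 1+a] we reach S
  have R1 : ∀ y : ℝ, 0 ≤ y → y ≤ 1 + a → ∃ n, b - a ≤ f^[n] y ∧ f^[n] y ≤ 1 := by
    intro y h0 h2
    obtain ⟨k, hk⟩ := exists_nat_ge (a / (1 + a - b))
    have hk' : a ≤ k * (1 + a - b) := by
      rw [div_le_iff₀ hd] at hk; linarith
    by_cases h : b - a ≤ y
    · exact Q k y h h2 (by linarith)
    · push_neg at h
      have hfy : f y = b - a + 1 - y := P1 y h0 (by linarith)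
      obtain ⟨n, hn1, hn2⟩ := Q k (f y) (by rw [hfy]; linarith) (by rw [hfy]; linarith)
        (by rw [hfy]; linarith)
      exact ⟨n + 1, by rwa [Function.iterate_succ_apply],
        by rwa [Function.iterate_succ_apply]⟩
  -- from [0, 1+a+b] we reach S
  have R2 : ∀ y : ℝ, 0 ≤ y → y ≤ 1 + a + b → ∃ n, b - a ≤ f^[n] y ∧ f^[n] y ≤ 1 := by
    intro y h0 h2
    by_cases h : y ≤ 1 + a
    · exact R1 y h0 h
    · push_neg at h
      have hfy : f y = 1 + a + b - y := P3 y h.le h2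
      obtain ⟨n, hn1, hn2⟩ := R1 (f y) (by rw [hfy]; linarith) (by rw [hfy]; linarith)
      exact ⟨n + 1, by rwa [Function.iterate_succ_apply],
        by rwa [Function.iterate_succ_apply]⟩
  -- from [0, ∞) we reach S
  have R3 : ∀ m : ℕ, ∀ y : ℝ, 0 ≤ y → y ≤ 1 + a + b + m * (1 + a + b) →
      ∃ n, b - a ≤ f^[n] y ∧ f^[n] y ≤ 1 := by
    intro m
    induction m with
    | zero => intro y h0 h2; exact R2 y h0 (by push_cast at h2; linarith)
    | succ m ih =>
      intro y h0 h2
      by_cases h : y ≤ 1 + a + b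
      · exact R2 y h0 h
      · push_neg at h
        have hfy : f y = y - (1 + a + b) := P4 y h.le
        obtain ⟨n, hn1, hn2⟩ := ih (f y) (by rw [hfy]; linarith)
          (by rw [hfy]; push_cast at h2 ⊢; linarith)
        exact ⟨n + 1, by rwa [Function.iterate_succ_apply],
          by rwa [Function.iterate_succ_apply]⟩
  intro x hx
  obtain ⟨m, hm⟩ := exists_nat_ge (x / (1 + a + b))
  have hm' : x ≤ m * (1 + a + b) := by
    rw [div_le_iff₀ (by linarith)] at hm; linarith
  obtain ⟨n, hn1, hn2⟩ := R3 m x hx (by nlinarith)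
  refine ⟨n, ?_⟩
  have : f^[n + 2] x = f (f (f^[n] x)) := by
    rw [show n + 2 = 2 + n by omega, Function.iterate_add_apply]
    rfl
  rw [this, hS _ hn1 hn2]
end

section
/- For every natural number N there exists ε > 0 such that, with a = 1 and b = 2 − ε and f(x) = |||x − 1| − a| − b|, the orbit of x = ε under f does not enter the 2-periodic interval [b − a, 1] = [1 − ε, 1] within the first N iterations: fᵏ(ε) ∉ [1 − ε, 1] for all k ≤ N. -/
/-! On `[0, 1]` the map `f` is the reflection `x ↦ 2 - ε - x`, and on `[1, 2]` it is the
translation `x ↦ x - ε`. So `f ε = 2 - 2ε`, after which the orbit walks down `[1, 2]` in steps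
of `ε` and needs about `1 / ε` steps to reach `[1 - ε, 1]`; taking `ε = 1 / (N + 3)` makes
this more than `N`. -/

open Set Function

noncomputable def foldMap (ε x : ℝ) : ℝ := |(|(|x - 1|) - 1|) - (2 - ε)|

lemma foldMap_of_mem_Icc_zero_one {ε x : ℝ} (hε : ε ≤ 1) (hx : x ∈ Icc 0 1) :
    foldMap ε x = 2 - ε - x := by
  obtain ⟨hx₀, hx₁⟩ := hx
  rw [foldMap, abs_of_nonpos (by linarith : x - 1 ≤ 0), abs_of_nonpos (by linarith : -(x - 1) - 1 ≤ 0),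
    abs_of_nonpos (by linarith : -(-(x - 1) - 1) - (2 - ε) ≤ 0)]
  ring

lemma foldMap_of_mem_Icc_one_two {ε x : ℝ} (hε : ε ≤ 1) (hx : x ∈ Icc 1 2) :
    foldMap ε x = x - ε := by
  obtain ⟨hx₁, hx₂⟩ := hx
  rw [foldMap, abs_of_nonneg (by linarith : 0 ≤ x - 1), abs_of_nonpos (by linarith : x - 1 - 1 ≤ 0),
    abs_of_nonpos (by linarith : -(x - 1 - 1) - (2 - ε) ≤ 0)]
  ring

lemma iterate_eq_sub_of_eqOn_Icc {f : ℝ → ℝ} {a b ε y : ℝ} (hf : ∀ x ∈ Icc a b, f x = x - ε)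
    (hε : 0 ≤ ε) (hy : y ≤ b) : ∀ k : ℕ, a ≤ y - k * ε → f^[k] y = y - k * ε
  | 0, _ => by simp
  | k + 1, hk => by
    push_cast at hk ⊢
    have hk' : a ≤ y - k * ε := by linarith
    rw [iterate_succ_apply', iterate_eq_sub_of_eqOn_Icc hf hε hy k hk',
      hf _ ⟨hk', by nlinarith [(k.cast_nonneg : (0 : ℝ) ≤ k)]⟩]
    ring

lemma foldMap_iterate_succ_self {ε : ℝ} (hε : 0 ≤ ε) (k : ℕ) (hk : (k + 2) * ε ≤ 1) :
    (foldMap ε)^[k + 1] ε = 2 - (k + 2) * ε := by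
  have hε₁ : ε ≤ 1 := by nlinarith [(k.cast_nonneg : (0 : ℝ) ≤ k)]
  have hfirst : foldMap ε ε = 2 - 2 * ε := by
    rw [foldMap_of_mem_Icc_zero_one hε₁ ⟨hε, hε₁⟩]; ring
  rw [iterate_succ_apply, hfirst,
    iterate_eq_sub_of_eqOn_Icc (fun x hx ↦ foldMap_of_mem_Icc_one_two hε₁ hx) hε (by linarith) k
      (by linarith)]
  ring

theorem arbitrarily_long_preperiod (N : ℕ) :
    ∃ ε : ℝ, 0 < ε ∧ ε < 1 ∧
      ∀ f : ℝ → ℝ, (∀ x, f x = |(|(|x - 1|) - 1|) - (2 - ε)|) →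
        ∀ k : ℕ, k ≤ N → f^[k] ε ∉ Set.Icc (1 - ε) 1 := by
  set ε : ℝ := 1 / (N + 3)
  have hε : 0 < ε := by positivity
  have hsteps : ∀ k : ℕ, k ≤ N → (k + 2) * ε < 1 := fun k hk ↦ by
    rw [mul_one_div, div_lt_one (by positivity)]
    exact_mod_cast Nat.add_lt_add_right (Nat.lt_succ_of_le hk) 2
  have hε₂ : 2 * ε < 1 := by simpa using hsteps 0 N.zero_le
  refine ⟨ε, hε, by linarith, fun f hf k hk ↦ ?_⟩
  obtain rfl : f = foldMap ε := funext hf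
  rcases k with _ | k
  · rw [iterate_zero_apply]
    exact fun h ↦ by linarith [h.1]
  · rw [foldMap_iterate_succ_self hε.le k (hsteps k (by omega)).le]
    exact fun h ↦ by linarith [h.2, hsteps k (by omega)]
end
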